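/- For all p, q ≥ 1, the double star S_{p,q} satisfies IC(S_{p,q}) = 4. -/

import Mathlib

namespace ICNL

variable {V : Type*}

/-- `S` is a dominating set of `G`. -/
def Dominating (G : SimpleGraph V) (S : Set V) : Prop :=
  ∀ v : V, v ∈ S ∨ ∃ u ∈ S, G.Adj u v

/-- `S` is an independent set of `G`. -/
def IndepSet (G : SimpleGraph V) (S : Set V) : Prop :=
  ∀ ⦃u : V⦄, u ∈ S → ∀ ⦃v : V⦄, v ∈ S → ¬ G.Adj u v

/-- `S` is an independent dominating set of `G`. -/
def IndepDom (G : SimpleGraph V) (S : Set V) : Prop :=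
  IndepSet G S ∧ Dominating G S

/-- `A` and `B` form an independent coalition in `G`. -/
def ICCoalition (G : SimpleGraph V) (A B : Set V) : Prop :=
  Disjoint A B ∧ IndepSet G A ∧ IndepSet G B ∧
    ¬ IndepDom G A ∧ ¬ IndepDom G B ∧ IndepDom G (A ∪ B)

/-- `π` is a partition of the vertex set into nonempty classes. -/
def IsPartition (π : Finset (Finset V)) : Prop :=
  (∀ A ∈ π, A.Nonempty) ∧ ∀ v : V, ∃! A : Finset V, A ∈ π ∧ v ∈ A

/-- `π` is an independent coalition partition of `G`. -/
def IsICPartition (G : SimpleGraph V) (π : Finset (Finset V)) : Prop :=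
  IsPartition π ∧
    ∀ A ∈ π, (∃ v : V, (A : Set V) = {v} ∧ Dominating G (A : Set V)) ∨
      (¬ IndepDom G (A : Set V) ∧
        ∃ B ∈ π, B ≠ A ∧ ICCoalition G (A : Set V) (B : Set V))

/-- The independent coalition number: the maximum number of classes of an
ic-partition of `G`. -/
noncomputable def IC (G : SimpleGraph V) : ℕ :=
  sSup {k | ∃ π : Finset (Finset V), IsICPartition G π ∧ π.card = k}


/-- The double star `S_{p,q}`: the two support vertices `Sum.inr (Sum.inr 0)` and
`Sum.inr (Sum.inr 1)` are adjacent, the `p` leaves `Sum.inl i` are adjacent to the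
first support vertex, and the `q` leaves `Sum.inr (Sum.inl j)` are adjacent to the
second support vertex. -/
def doubleStar (p q : ℕ) : SimpleGraph (Fin p ⊕ Fin q ⊕ Fin 2) :=
  SimpleGraph.fromRel (fun u v =>
    (u = Sum.inr (Sum.inr 0) ∧ v = Sum.inr (Sum.inr 1)) ∨
    ((∃ i : Fin p, u = Sum.inl i) ∧ v = Sum.inr (Sum.inr 0)) ∨
    ((∃ j : Fin q, u = Sum.inr (Sum.inl j)) ∧ v = Sum.inr (Sum.inr 1)))

/-! The independent dominating sets of `S_{p,q}` are exactly `{c₀} ∪ R`, `{c₁} ∪ L` and `L ∪ R`,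
where `L` and `R` are the leaves at the support vertices `c₀` and `c₁`. Since no single vertex
dominates, every class of an ic-partition has a partner whose union with it is one of these three
sets. Let `A₀ ∋ c₀` and `A₁ ∋ c₁` be the classes of the support vertices. If two classes `C`, `D`
cover `L ∪ R`, every class is `A₀`, `A₁`, `C` or `D`; otherwise every class other than `A₀`, `A₁`
is `({c₀} ∪ R) \ A₀` or `({c₁} ∪ L) \ A₁`. Either way there are at most four classes, and
`{c₀}, {c₁}, L, R` is an ic-partition with four. -/

section General

variable {G : SimpleGraph V}

lemma IndepSet.mono {S T : Set V} (hT : IndepSet G T) (hST : S ⊆ T) : IndepSet G S :=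
  fun _ hu _ hv => hT (hST hu) (hST hv)

lemma IndepSet.not_dominating_of_ssubset {S T : Set V} (hT : IndepSet G T) (hST : S ⊂ T) :
    ¬ Dominating G S := by
  intro hS
  obtain ⟨v, hvT, hvS⟩ := Set.exists_of_ssubset hST
  obtain hv | ⟨u, hu, huv⟩ := hS v
  · exact hvS hv
  · exact hT (hST.subset hu) hvT huv

lemma IndepDom.mem_iff {S : Set V} (h : IndepDom G S) (v : V) :
    v ∈ S ↔ ∀ u ∈ S, ¬ G.Adj u v :=
  ⟨fun hv _ hu => h.1 hu hv, fun hv => (h.2 v).resolve_right fun ⟨u, hu, huv⟩ => hv u hu huv⟩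

lemma ICCoalition.symm {A B : Set V} (h : ICCoalition G A B) : ICCoalition G B A :=
  ⟨h.1.symm, h.2.2.1, h.2.1, h.2.2.2.2.1, h.2.2.2.1, Set.union_comm A B ▸ h.2.2.2.2.2⟩

lemma ICCoalition.of_indepDom_union {A B : Set V} (hAB : Disjoint A B)
    (hA : ¬ IndepDom G A) (hB : ¬ IndepDom G B) (h : IndepDom G (A ∪ B)) :
    ICCoalition G A B :=
  ⟨hAB, h.1.mono Set.subset_union_left, h.1.mono Set.subset_union_right, hA, hB, h⟩

lemma IsPartition.eq_of_mem {π : Finset (Finset V)} (hπ : IsPartition π) {A B : Finset V}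
    {v : V} (hA : A ∈ π) (hB : B ∈ π) (hvA : v ∈ A) (hvB : v ∈ B) : A = B :=
  (hπ.2 v).unique ⟨hA, hvA⟩ ⟨hB, hvB⟩

lemma IsPartition.eq_or_eq_sdiff [DecidableEq V] {π : Finset (Finset V)} (hπ : IsPartition π)
    {A E F S : Finset V} {c : V} (hA : A ∈ π) (hcA : c ∈ A) (hE : E ∈ π) (hF : F ∈ π)
    (hEF : Disjoint E F) (hS : E ∪ F = S) (hcS : c ∈ S) : E = A ∨ E = S \ A := by
  rw [← hS, Finset.mem_union] at hcS
  rcases hcS with hcE | hcF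
  · exact .inl (hπ.eq_of_mem hE hA hcE hcA)
  · obtain rfl := hπ.eq_of_mem hF hA hcF hcA
    exact .inr (by rw [← hS, Finset.union_sdiff_cancel_right hEF])

lemma IsICPartition.exists_coalition {π : Finset (Finset V)} (hπ : IsICPartition G π)
    (hG : ∀ v, ¬ Dominating G {v}) {A : Finset V} (hA : A ∈ π) :
    ∃ B ∈ π, ICCoalition G A B := by
  obtain ⟨v, hAv, hdom⟩ | ⟨-, B, hB, -, hAB⟩ := hπ.2 A hA
  · exact absurd (hAv ▸ hdom) (hG v)
  · exact ⟨B, hB, hAB⟩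

end General

section DoubleStar

variable {p q : ℕ}

local notation "c₀" => (Sum.inr (Sum.inr 0) : Fin _ ⊕ Fin _ ⊕ Fin 2)
local notation "c₁" => (Sum.inr (Sum.inr 1) : Fin _ ⊕ Fin _ ⊕ Fin 2)

def leftLeaves (p q : ℕ) : Finset (Fin p ⊕ Fin q ⊕ Fin 2) := Finset.univ.image Sum.inl

def rightLeaves (p q : ℕ) : Finset (Fin p ⊕ Fin q ⊕ Fin 2) :=
  Finset.univ.image (Sum.inr ∘ Sum.inl)

@[simp]
lemma mem_leftLeaves {v : Fin p ⊕ Fin q ⊕ Fin 2} :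
    v ∈ leftLeaves p q ↔ ∃ i, v = Sum.inl i := by
  simp [leftLeaves, eq_comm]

@[simp]
lemma mem_rightLeaves {v : Fin p ⊕ Fin q ⊕ Fin 2} :
    v ∈ rightLeaves p q ↔ ∃ j, v = Sum.inr (Sum.inl j) := by
  simp [rightLeaves, eq_comm]

lemma eq_c₀_or_eq_c₁_or_mem_leaves (v : Fin p ⊕ Fin q ⊕ Fin 2) :
    v = c₀ ∨ v = c₁ ∨ v ∈ leftLeaves p q ∪ rightLeaves p q := by
  rcases v with i | j | k
  · simp
  · simp
  · fin_cases k <;> simp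

@[simp]
lemma doubleStar_adj_inl {u : Fin p ⊕ Fin q ⊕ Fin 2} {i : Fin p} :
    (doubleStar p q).Adj u (Sum.inl i) ↔ u = c₀ := by
  constructor
  · simp [doubleStar]
  · rintro rfl; simp [doubleStar]

@[simp]
lemma doubleStar_adj_inr_inl {u : Fin p ⊕ Fin q ⊕ Fin 2} {j : Fin q} :
    (doubleStar p q).Adj u (Sum.inr (Sum.inl j)) ↔ u = c₁ := by
  constructor
  · simp [doubleStar]
  · rintro rfl; simp [doubleStar]

lemma doubleStar_adj_c₀_c₁ : (doubleStar p q).Adj c₀ c₁ := by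
  simp [doubleStar]

lemma not_dominating_doubleStar_singleton (hp : 1 ≤ p) (hq : 1 ≤ q)
    (v : Fin p ⊕ Fin q ⊕ Fin 2) : ¬ Dominating (doubleStar p q) {v} := by
  intro h
  rcases v with i | j | k
  · simpa [doubleStar] using h c₁
  · simpa [doubleStar] using h c₀
  · fin_cases k
    · simpa [doubleStar] using h (Sum.inr (Sum.inl ⟨0, hq⟩))
    · simpa [doubleStar] using h (Sum.inl ⟨0, hp⟩)

lemma eq_of_indepDom_doubleStar {S : Finset (Fin p ⊕ Fin q ⊕ Fin 2)}
    (h : IndepDom (doubleStar p q) S) :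
    S = insert c₀ (rightLeaves p q) ∨ S = insert c₁ (leftLeaves p q) ∨
      S = leftLeaves p q ∪ rightLeaves p q := by
  have hL : ∀ i, Sum.inl i ∈ S ↔ c₀ ∉ S := fun i => by
    rw [← Finset.mem_coe, h.mem_iff]; simp
  have hR : ∀ j, Sum.inr (Sum.inl j) ∈ S ↔ c₁ ∉ S := fun j => by
    rw [← Finset.mem_coe, h.mem_iff]; simp
  have h₀₁ : c₀ ∈ S → c₁ ∉ S := fun h₀ h₁ => h.1 h₀ h₁ doubleStar_adj_c₀_c₁
  by_cases h₀ : c₀ ∈ S <;> by_cases h₁ : c₁ ∈ S <;> simp_all [Finset.ext_iff]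

lemma indepDom_insert_c₀_rightLeaves :
    IndepDom (doubleStar p q) ↑(insert c₀ (rightLeaves p q)) := by
  constructor
  · rintro u hu v hv huv
    simp only [Finset.coe_insert, Set.mem_insert_iff, Finset.mem_coe, mem_rightLeaves] at hu hv
    rcases hu with rfl | ⟨j, rfl⟩ <;> rcases hv with rfl | ⟨j', rfl⟩ <;> simp_all [doubleStar]
  · rintro (i | j | k)
    · simp
    · simp
    · fin_cases k <;> simp [doubleStar]

lemma indepDom_insert_c₁_leftLeaves :
    IndepDom (doubleStar p q) ↑(insert c₁ (leftLeaves p q)) := by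
  constructor
  · rintro u hu v hv huv
    simp only [Finset.coe_insert, Set.mem_insert_iff, Finset.mem_coe, mem_leftLeaves] at hu hv
    rcases hu with rfl | ⟨i, rfl⟩ <;> rcases hv with rfl | ⟨i', rfl⟩ <;> simp_all [doubleStar]
  · rintro (i | j | k)
    · simp
    · simp
    · fin_cases k <;> simp [doubleStar]

lemma icCoalition_c₀_rightLeaves (hq : 1 ≤ q) :
    ICCoalition (doubleStar p q) ↑({c₀} : Finset (Fin p ⊕ Fin q ⊕ Fin 2)) ↑(rightLeaves p q) := by
  have hS := indepDom_insert_c₀_rightLeaves (p := p) (q := q)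
  rw [Finset.coe_insert] at hS
  rw [Finset.coe_singleton]
  refine .of_indepDom_union (Set.disjoint_singleton_left.2 (by simp))
    (fun h => hS.1.not_dominating_of_ssubset ?_ h.2)
    (fun h => hS.1.not_dominating_of_ssubset ?_ h.2) (by rwa [Set.singleton_union])
  · exact Set.ssubset_iff_of_subset (by simp) |>.2 ⟨Sum.inr (Sum.inl ⟨0, hq⟩), by simp, by simp⟩
  · exact Set.ssubset_insert (by simp)

lemma icCoalition_c₁_leftLeaves (hp : 1 ≤ p) :
    ICCoalition (doubleStar p q) ↑({c₁} : Finset (Fin p ⊕ Fin q ⊕ Fin 2)) ↑(leftLeaves p q) := by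
  have hS := indepDom_insert_c₁_leftLeaves (p := p) (q := q)
  rw [Finset.coe_insert] at hS
  rw [Finset.coe_singleton]
  refine .of_indepDom_union (Set.disjoint_singleton_left.2 (by simp))
    (fun h => hS.1.not_dominating_of_ssubset ?_ h.2)
    (fun h => hS.1.not_dominating_of_ssubset ?_ h.2) (by rwa [Set.singleton_union])
  · exact Set.ssubset_iff_of_subset (by simp) |>.2 ⟨Sum.inl ⟨0, hp⟩, by simp, by simp⟩
  · exact Set.ssubset_insert (by simp)

lemma isICPartition_doubleStar (hp : 1 ≤ p) (hq : 1 ≤ q) :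
    IsICPartition (doubleStar p q) {{c₀}, {c₁}, leftLeaves p q, rightLeaves p q} := by
  refine ⟨⟨?_, fun v => ?_⟩, ?_⟩
  · simp only [Finset.mem_insert, Finset.mem_singleton]
    rintro A (rfl | rfl | rfl | rfl)
    · simp
    · simp
    · exact ⟨Sum.inl ⟨0, hp⟩, by simp⟩
    · exact ⟨Sum.inr (Sum.inl ⟨0, hq⟩), by simp⟩
  · obtain ⟨A, hA, hvA⟩ :
        ∃ A ∈ ({{c₀}, {c₁}, leftLeaves p q, rightLeaves p q} : Finset _), v ∈ A := by
      obtain rfl | rfl | hv := eq_c₀_or_eq_c₁_or_mem_leaves v <;> simp_all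
    refine ⟨A, ⟨hA, hvA⟩, fun B ⟨hB, hvB⟩ => ?_⟩
    simp only [Finset.mem_insert, Finset.mem_singleton] at hA hB
    rcases hA with rfl | rfl | rfl | rfl <;> rcases hB with rfl | rfl | rfl | rfl <;>
      rcases v with i | j | k <;> simp_all
  · simp only [Finset.mem_insert, Finset.mem_singleton]
    have h₀ := icCoalition_c₀_rightLeaves (p := p) hq
    have h₁ := icCoalition_c₁_leftLeaves (q := q) hp
    have hR : rightLeaves p q ≠ {c₀} :=
      (ne_of_mem_of_not_mem' (Finset.mem_singleton_self _) (by simp)).symm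
    have hL : leftLeaves p q ≠ {c₁} :=
      (ne_of_mem_of_not_mem' (Finset.mem_singleton_self _) (by simp)).symm
    rintro A (rfl | rfl | rfl | rfl)
    · exact .inr ⟨h₀.2.2.2.1, _, by simp, hR, h₀⟩
    · exact .inr ⟨h₁.2.2.2.1, _, by simp, hL, h₁⟩
    · exact .inr ⟨h₁.2.2.2.2.1, _, by simp, hL.symm, h₁.symm⟩
    · exact .inr ⟨h₀.2.2.2.2.1, _, by simp, hR.symm, h₀.symm⟩

lemma card_doubleStar_partition (hp : 1 ≤ p) :
    ({{c₀}, {c₁}, leftLeaves p q, rightLeaves p q} : Finset (Finset _)).card = 4 := by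
  have hc₀ := Finset.mem_singleton_self (c₀ : Fin p ⊕ Fin q ⊕ Fin 2)
  have hc₁ := Finset.mem_singleton_self (c₁ : Fin p ⊕ Fin q ⊕ Fin 2)
  have hL : (Sum.inl ⟨0, hp⟩ : Fin p ⊕ Fin q ⊕ Fin 2) ∈ leftLeaves p q := by simp
  exact Finset.card_eq_four.2 ⟨_, _, _, _, by simp, ne_of_mem_of_not_mem' hc₀ (by simp),
    ne_of_mem_of_not_mem' hc₀ (by simp), ne_of_mem_of_not_mem' hc₁ (by simp),
    ne_of_mem_of_not_mem' hc₁ (by simp), ne_of_mem_of_not_mem' hL (by simp), rfl⟩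

lemma card_le_four_of_isICPartition_doubleStar (hp : 1 ≤ p) (hq : 1 ≤ q)
    {π : Finset (Finset (Fin p ⊕ Fin q ⊕ Fin 2))} (hπ : IsICPartition (doubleStar p q) π) :
    π.card ≤ 4 := by
  obtain ⟨A₀, ⟨hA₀, hc₀⟩, -⟩ := hπ.1.2 c₀
  obtain ⟨A₁, ⟨hA₁, hc₁⟩, -⟩ := hπ.1.2 c₁
  by_cases hS : ∃ C ∈ π, ∃ D ∈ π, C ∪ D = leftLeaves p q ∪ rightLeaves p q
  · obtain ⟨C, hC, D, hD, hCD⟩ := hS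
    calc π.card ≤ ({A₀, A₁, C, D} : Finset _).card := Finset.card_le_card fun E hE => ?_
      _ ≤ 4 := Finset.card_le_four
    obtain ⟨v, hv⟩ := hπ.1.1 E hE
    simp only [Finset.mem_insert, Finset.mem_singleton]
    obtain rfl | rfl | hleaf := eq_c₀_or_eq_c₁_or_mem_leaves v
    · exact .inl (hπ.1.eq_of_mem hE hA₀ hv hc₀)
    · exact .inr (.inl (hπ.1.eq_of_mem hE hA₁ hv hc₁))
    · rw [← hCD, Finset.mem_union] at hleaf
      rcases hleaf with h | h
      · exact .inr (.inr (.inl (hπ.1.eq_of_mem hE hC hv h)))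
      · exact .inr (.inr (.inr (hπ.1.eq_of_mem hE hD hv h)))
  · calc π.card ≤ ({A₀, A₁, insert c₀ (rightLeaves p q) \ A₀,
          insert c₁ (leftLeaves p q) \ A₁} : Finset _).card :=
          Finset.card_le_card fun E hE => ?_
      _ ≤ 4 := Finset.card_le_four
    obtain ⟨F, hF, hEF⟩ := hπ.exists_coalition (not_dominating_doubleStar_singleton hp hq) hE
    have hdisj : Disjoint E F := Finset.disjoint_coe.1 hEF.1
    have hEF_indepDom := hEF.2.2.2.2.2
    rw [← Finset.coe_union] at hEF_indepDom
    simp only [Finset.mem_insert, Finset.mem_singleton]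
    rcases eq_of_indepDom_doubleStar hEF_indepDom with h | h | h
    · rcases hπ.1.eq_or_eq_sdiff hA₀ hc₀ hE hF hdisj h (by simp) with h | h <;> tauto
    · rcases hπ.1.eq_or_eq_sdiff hA₁ hc₁ hE hF hdisj h (by simp) with h | h <;> tauto
    · exact absurd ⟨E, hE, F, hF, h⟩ hS

end DoubleStar

theorem stmt_7 (p q : ℕ) (hp : 1 ≤ p) (hq : 1 ≤ q) : IC (doubleStar p q) = 4 :=
  IsGreatest.csSup_eq ⟨⟨_, isICPartition_doubleStar hp hq, card_doubleStar_partition hp⟩,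
    by rintro k ⟨π, hπ, rfl⟩; exact card_le_four_of_isICPartition_doubleStar hp hq hπ⟩

end ICNL
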